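/- For any unitary u ∈ M_n(ℂ), the map Ad u (x) = u x u* is extremal among positive maps: if Ψ is a positive linear map on M_n(ℂ) such that Ad u − Ψ is positive, then Ψ = λ · Ad u for some λ ∈ [0,1]. -/

import Mathlib

/-!
Conjugating by `u*` reduces the claim to a map `Φ = Ad u* ∘ Ψ` with `0 ≤ Φ ≤ id` on positive
matrices. A positive matrix dominated by `v v*` is a multiple of it, so `Φ (v v*) = c_v • v v*`
for every vector `v`. Testing the parallelogram law
`Φ ((v+w)(v+w)*) + Φ ((v-w)(v-w)*) = 2 Φ (v v*) + 2 Φ (w w*)` against a vector orthogonal to `w`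
but not to `v`, and then with the roles of `v` and `w` exchanged, gives `c_v = c_w` for linearly
independent `v, w`. By polarization the matrices `v v*` span `M_n`, so `Φ` is a scalar `λ`, and
`0 ≤ λ ≤ 1` because `Φ 1` and `1 - Φ 1` are positive.
-/

open Matrix ComplexOrder

/-- The algebra of `n × n` complex matrices. -/
abbrev Mat (n : ℕ) := Matrix (Fin n) (Fin n) ℂ

/-- The map `Ad v : x ↦ v x v*` as a linear map. -/
noncomputable def adL {n : ℕ} (v : Mat n) : Mat n →ₗ[ℂ] Mat n where
  toFun x := v * x * star v
  map_add' x y := by simp [Matrix.mul_add, Matrix.add_mul]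
  map_smul' c x := by simp [Matrix.mul_smul, Matrix.smul_mul]

/-- A positive map sends positive semidefinite matrices to positive semidefinite matrices. -/
def IsPosMap (n : ℕ) (Φ : Mat n →ₗ[ℂ] Mat n) : Prop :=
  ∀ A : Mat n, A.PosSemidef → (Φ A).PosSemidef

/-- `Φ` is completely positive: `Φ ⊗ id_k` is positive for every `k`, where a block matrix
in `M_n ⊗ M_k` is applied `Φ` blockwise. -/
def IsCompletelyPositive (n : ℕ) (Φ : Mat n →ₗ[ℂ] Mat n) : Prop :=
  ∀ k : ℕ, ∀ A : Matrix (Fin n × Fin k) (Fin n × Fin k) ℂ, A.PosSemidef →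
    (Matrix.of fun p q : Fin n × Fin k =>
      (Φ (Matrix.of fun i j => A (i, p.2) (j, q.2))) p.1 q.1).PosSemidef

/-- Unital completely positive map. -/
def IsUCP (n : ℕ) (Φ : Mat n →ₗ[ℂ] Mat n) : Prop :=
  Φ 1 = 1 ∧ IsCompletelyPositive n Φ

/-- A finite operational partition of unity: nonzero matrices with `∑ vᵢ vᵢ* = 1`. -/
def IsFOP {n m : ℕ} (v : Fin m → Mat n) : Prop :=
  (∀ i, v i ≠ 0) ∧ ∑ i, v i * star (v i) = 1


namespace Matrix

theorem vecMulVec_mul_mul_vecMulVec {α l m n o : Type*} [CommSemiring α] [Fintype m] [Fintype n]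
    (a : l → α) (b : m → α) (A : Matrix m n α) (c : n → α) (d : o → α) :
    vecMulVec a b * A * vecMulVec c d = (b ⬝ᵥ A *ᵥ c) • vecMulVec a d := by
  rw [Matrix.mul_assoc, mul_vecMulVec, vecMulVec_mul, vecMul_vecMulVec, vecMulVec_smul]

theorem four_smul_vecMulVec_star {m : Type*} (a b : m → ℂ) :
    (4 : ℂ) • vecMulVec a (star b) =
      vecMulVec (a + b) (star (a + b)) - vecMulVec (a - b) (star (a - b)) +
        Complex.I • vecMulVec (a + Complex.I • b) (star (a + Complex.I • b)) -
        Complex.I • vecMulVec (a - Complex.I • b) (star (a - Complex.I • b)) := by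
  ext i j
  simp only [vecMulVec_apply, smul_apply, add_apply, sub_apply, Pi.star_apply, Pi.add_apply,
    Pi.sub_apply, Pi.smul_apply, smul_eq_mul, star_add, star_sub, star_mul', Complex.star_def,
    Complex.conj_I]
  ring_nf
  simp only [Complex.I_sq]
  ring

theorem linearMap_ext_vecMulVec_star_self {m M : Type*} [Fintype m] [DecidableEq m]
    [AddCommGroup M] [Module ℂ M] {Φ Ψ : Matrix m m ℂ →ₗ[ℂ] M}
    (h : ∀ v, Φ (vecMulVec v (star v)) = Ψ (vecMulVec v (star v))) : Φ = Ψ := by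
  have hrank (a b : m → ℂ) : Φ (vecMulVec a (star b)) = Ψ (vecMulVec a (star b)) := by
    apply smul_right_injective M (four_ne_zero : (4 : ℂ) ≠ 0)
    simp only [← map_smul, four_smul_vecMulVec_star]
    simp only [map_add, map_sub, map_smul, h]
  refine LinearMap.ext fun A => A.induction_on' (by simp only [map_zero])
    (fun A B hA hB => by rw [map_add, map_add, hA, hB]) fun i j x => ?_
  have hsingle : single i j x = vecMulVec (Pi.single i x) (star (Pi.single j 1)) := by
    ext k l
    simp only [single_apply, vecMulVec_apply, ← Pi.single_star, star_one, Pi.single_apply]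
    split_ifs <;> simp_all
  rw [hsingle, hrank]

variable {𝕜 m : Type*} [RCLike 𝕜] [Fintype m]

theorem PosSemidef.mulVec_eq_zero_of_le {A B : Matrix m m 𝕜} {w : m → 𝕜} (hA : A.PosSemidef)
    (hle : (B - A).PosSemidef) (hw : star w ⬝ᵥ B *ᵥ w = 0) : A *ᵥ w = 0 := by
  refine (hA.dotProduct_mulVec_zero_iff w).1 (le_antisymm ?_ (hA.dotProduct_mulVec_nonneg w))
  have := hle.dotProduct_mulVec_nonneg w
  rwa [sub_mulVec, dotProduct_sub, hw, zero_sub, neg_nonneg] at this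

theorem PosSemidef.exists_eq_smul_of_le_vecMulVec {A : Matrix m m 𝕜} {v : m → 𝕜}
    (hA : A.PosSemidef) (hle : (vecMulVec v (star v) - A).PosSemidef) :
    ∃ c : 𝕜, A = c • vecMulVec v (star v) := by
  have hker (w : m → 𝕜) (hw : star v ⬝ᵥ w = 0) : A *ᵥ w = 0 :=
    hA.mulVec_eq_zero_of_le hle (by simp [vecMulVec_mulVec, hw])
  obtain rfl | hv := eq_or_ne v 0
  · exact ⟨0, ext_iff_mulVec.2 fun w => by simpa using hker w (by simp)⟩
  set t := star v ⬝ᵥ v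
  have ht : t ≠ 0 := by simpa [t] using hv
  have ht_real : star t = t := IsSelfAdjoint.of_nonneg (dotProduct_star_self_nonneg v)
  -- `p` is the orthogonal projection onto `𝕜 ∙ v`; `A` kills its complement, so `A = p A p`.
  set p := t⁻¹ • vecMulVec v (star v)
  have hAp : A * p = A := ext_iff_mulVec.2 fun x => by
    have := hker (x - p *ᵥ x) <| by
      simp only [p, dotProduct_sub, smul_mulVec, vecMulVec_mulVec, dotProduct_smul,
        op_smul_eq_mul, smul_eq_mul]
      rw [inv_mul_cancel_left₀ ht, sub_self]
    rwa [mulVec_sub, sub_eq_zero, mulVec_mulVec, eq_comm] at this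
  have hpA : p * A = A := by
    simpa [p, conjTranspose_mul, conjTranspose_vecMulVec, hA.1.eq, ht_real] using
      congrArg (·ᴴ) hAp
  refine ⟨t⁻¹ * t⁻¹ * (star v ⬝ᵥ A *ᵥ v), ?_⟩
  calc A = p * A * p := by rw [hpA, hAp]
    _ = _ := by
      simp only [p, Matrix.smul_mul, Matrix.mul_smul, vecMulVec_mul_mul_vecMulVec, smul_smul]
      ring_nf

theorem exists_dotProduct_eq_zero_and_ne_zero {v w : m → 𝕜} (h : ∀ a : 𝕜, v ≠ a • w) :
    ∃ z, star w ⬝ᵥ z = 0 ∧ star v ⬝ᵥ z ≠ 0 := by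
  set z := v - (star w ⬝ᵥ v / star w ⬝ᵥ w) • w
  have hwz : star w ⬝ᵥ z = 0 := by
    rw [dotProduct_sub, dotProduct_smul, smul_eq_mul,
      div_mul_cancel_of_imp fun h => by simp [dotProduct_star_self_eq_zero.1 h], sub_self]
  have hz : z ≠ 0 := sub_ne_zero.2 (h _)
  refine ⟨z, hwz, ?_⟩
  have hvz : star v ⬝ᵥ z = star z ⬝ᵥ z := by
    conv_lhs => rw [show v = z + (star w ⬝ᵥ v / star w ⬝ᵥ w) • w from (sub_add_cancel _ _).symm]
    rw [star_add, add_dotProduct, star_smul, smul_dotProduct, hwz, smul_zero, add_zero]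
  rwa [hvz, Ne, dotProduct_star_self_eq_zero]

theorem add_eq_two_mul_of_map_vecMulVec (Φ : Matrix m m 𝕜 →ₗ[𝕜] Matrix m m 𝕜) {v w z : m → 𝕜}
    {α β a b : 𝕜} (hv : Φ (vecMulVec v (star v)) = α • vecMulVec v (star v))
    (hw : Φ (vecMulVec w (star w)) = β • vecMulVec w (star w))
    (hadd : Φ (vecMulVec (v + w) (star (v + w))) = a • vecMulVec (v + w) (star (v + w)))
    (hsub : Φ (vecMulVec (v - w) (star (v - w))) = b • vecMulVec (v - w) (star (v - w)))
    (hwz : star w ⬝ᵥ z = 0) (hvz : star v ⬝ᵥ z ≠ 0) :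
    a + b = 2 * α := by
  have hpar : vecMulVec (v + w) (star (v + w)) + vecMulVec (v - w) (star (v - w)) =
      (2 : 𝕜) • vecMulVec v (star v) + (2 : 𝕜) • vecMulVec w (star w) := by
    ext i j; simp [vecMulVec_apply]; ring
  have hzw : star z ⬝ᵥ w = 0 := by rw [star_dotProduct, hwz, star_zero]
  have hzv : star z ⬝ᵥ v ≠ 0 := by rwa [star_dotProduct, star_ne_zero]
  have := congrArg (fun M => star z ⬝ᵥ Φ M *ᵥ z) hpar
  simp only [map_add, map_smul, hv, hw, hadd, hsub] at this
  simp only [add_mulVec, smul_mulVec, vecMulVec_mulVec, dotProduct_add, dotProduct_sub,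
    dotProduct_smul, star_add, star_sub, add_dotProduct, sub_dotProduct, hwz, hzw, add_zero,
    sub_zero, op_smul_eq_mul, smul_eq_mul, mul_zero] at this
  exact mul_right_cancel₀ (mul_ne_zero hzv hvz) (by linear_combination this)

theorem exists_forall_map_vecMulVec_star_self_eq_smul (Φ : Matrix m m 𝕜 →ₗ[𝕜] Matrix m m 𝕜)
    (h : ∀ v, ∃ c : 𝕜, Φ (vecMulVec v (star v)) = c • vecMulVec v (star v)) :
    ∃ c : 𝕜, ∀ v, Φ (vecMulVec v (star v)) = c • vecMulVec v (star v) := by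
  rcases isEmpty_or_nonempty m with hm | hm
  · exact ⟨0, fun v => Subsingleton.elim _ _⟩
  choose c hc using h
  set v₀ : m → 𝕜 := 1
  have hv₀ : v₀ ≠ 0 := one_ne_zero
  refine ⟨c v₀, fun w => ?_⟩
  by_cases hdep : ∃ a : 𝕜, w = a • v₀
  · obtain ⟨a, rfl⟩ := hdep
    rw [star_smul, smul_vecMulVec, vecMulVec_smul, map_smul, map_smul, hc]
    module
  push Not at hdep
  obtain ⟨z₁, hv₀z₁, hwz₁⟩ := exists_dotProduct_eq_zero_and_ne_zero hdep
  obtain ⟨z₂, hwz₂, hv₀z₂⟩ := exists_dotProduct_eq_zero_and_ne_zero (v := v₀) (w := w) fun a ha =>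
    hdep a⁻¹ <| by
      rw [ha, smul_smul, inv_mul_cancel₀ (by rintro rfl; simp_all), one_smul]
  have hneg : vecMulVec (w - v₀) (star (w - v₀)) = vecMulVec (v₀ - w) (star (v₀ - w)) := by
    rw [← neg_sub, star_neg, neg_vecMulVec, vecMulVec_neg, neg_neg]
  have e₀ := add_eq_two_mul_of_map_vecMulVec Φ (hc v₀) (hc w) (hc _) (hc _) hwz₂ hv₀z₂
  have e₁ := add_eq_two_mul_of_map_vecMulVec Φ (hc w) (hc v₀) (by rw [add_comm]; exact hc _)
    (by rw [hneg]; exact hc _) hv₀z₁ hwz₁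
  rw [hc w, mul_left_cancel₀ two_ne_zero (e₁.symm.trans e₀)]

end Matrix

@[simp]
theorem adL_apply {n : ℕ} (v x : Mat n) : adL v x = v * x * star v := rfl

theorem adL_comp_adL {n : ℕ} (a b : Mat n) : adL a ∘ₗ adL b = adL (a * b) :=
  LinearMap.ext fun x => by simp [star_mul, Matrix.mul_assoc]

theorem adL_one {n : ℕ} : adL (1 : Mat n) = LinearMap.id :=
  LinearMap.ext fun x => by simp

theorem isPosMap_adL {n : ℕ} (v : Mat n) : IsPosMap n (adL v) :=
  fun _ hA => hA.mul_mul_conjTranspose_same v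

theorem IsPosMap.comp {n : ℕ} {Φ Ψ : Mat n →ₗ[ℂ] Mat n} (hΦ : IsPosMap n Φ) (hΨ : IsPosMap n Ψ) :
    IsPosMap n (Φ ∘ₗ Ψ) :=
  fun A hA => hΦ _ (hΨ A hA)

theorem IsPosMap.exists_eq_smul_id_of_id_sub {n : ℕ} {Φ : Mat n →ₗ[ℂ] Mat n} (hΦ : IsPosMap n Φ)
    (hΦ' : IsPosMap n (LinearMap.id - Φ)) :
    ∃ l : ℝ, l ∈ Set.Icc (0 : ℝ) 1 ∧ Φ = (l : ℂ) • LinearMap.id := by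
  obtain ⟨c, hc⟩ := exists_forall_map_vecMulVec_star_self_eq_smul Φ fun v =>
    (hΦ _ (posSemidef_vecMulVec_self_star v)).exists_eq_smul_of_le_vecMulVec
      (hΦ' _ (posSemidef_vecMulVec_self_star v))
  have hΦc : Φ = c • LinearMap.id := linearMap_ext_vecMulVec_star_self hc
  rcases Nat.eq_zero_or_pos n with rfl | hn
  · exact ⟨0, by simp, Subsingleton.elim _ _⟩
  have h₀ : 0 ≤ c := by simpa [hΦc] using (hΦ 1 PosSemidef.one).diag_nonneg (i := ⟨0, hn⟩)
  have h₁ : c ≤ 1 := by simpa [hΦc] using (hΦ' 1 PosSemidef.one).diag_nonneg (i := ⟨0, hn⟩)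
  obtain ⟨l, rfl⟩ : ∃ l : ℝ, c = l := ⟨c.re, Complex.eq_re_of_ofReal_le h₀⟩
  exact ⟨l, ⟨by exact_mod_cast h₀, by exact_mod_cast h₁⟩, hΦc⟩

theorem adU_extremal {n : ℕ} (u : Mat n) (hu : u * star u = 1) (hu' : star u * u = 1)
    (Ψ : Mat n →ₗ[ℂ] Mat n) (hΨ : IsPosMap n Ψ) (hd : IsPosMap n (adL u - Ψ)) :
    ∃ l : ℝ, l ∈ Set.Icc (0 : ℝ) 1 ∧ Ψ = (l : ℂ) • adL u := by
  have hid_sub : LinearMap.id - adL (star u) ∘ₗ Ψ = adL (star u) ∘ₗ (adL u - Ψ) := by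
    rw [LinearMap.comp_sub, adL_comp_adL, hu', adL_one]
  obtain ⟨l, hl, hΦl⟩ :=
    ((isPosMap_adL _).comp hΨ).exists_eq_smul_id_of_id_sub (hid_sub ▸ (isPosMap_adL _).comp hd)
  refine ⟨l, hl, ?_⟩
  calc Ψ = adL u ∘ₗ (adL (star u) ∘ₗ Ψ) := by
        rw [← LinearMap.comp_assoc, adL_comp_adL, hu, adL_one, LinearMap.id_comp]
    _ = (l : ℂ) • adL u := by rw [hΦl, LinearMap.comp_smul, LinearMap.comp_id]
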